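/- (Optimality of the degrees of precision.) Let T be a (p,q)-banded matrix which is strictly positive inside the band: T i j > 0 whenever i ≤ j + p and j ≤ i + q. Fix a ∈ {1,…,p}, b ∈ {1,…,q} and N ∈ ℕ with N ≥ max(p,q), and set d := ⌈(N+2−a)/p⌉ + ⌈(N+2−b)/q⌉ − 1. Then for every M ≥ N+1, the (b−1, a−1) entry of (T^{[M]})^{d+1} is strictly greater than the (b−1, a−1) entry of (T^{[N]})^{d+1} (rows and columns indexed from 0). -/
import Mathlib

open Matrix Finset
lemma pow_entry_nonneg {n : ℕ} (A : Matrix (Fin n) (Fin n) ℝ)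
    (hA : ∀ i j, 0 ≤ A i j) : ∀ k (i j : Fin n), 0 ≤ (A ^ k) i j := by
  intro k
  induction k with
  | zero => intro i j; rw [pow_zero, Matrix.one_apply]; split <;> norm_num
  | succ k ih =>
    intro i j
    rw [pow_succ, Matrix.mul_apply]
    exact Finset.sum_nonneg fun m _ => mul_nonneg (ih i m) (hA m j)

lemma pow_entry_pos (p q M : ℕ) (T : ℕ → ℕ → ℝ)
    (hpos : ∀ i j, i ≤ j + p → j ≤ i + q → 0 < T i j)
    (hnn : ∀ i j : ℕ, 0 ≤ T i j) :
    ∀ k (i j : Fin (M+1)), i.val ≤ j.val + k * p → j.val ≤ i.val + k * q →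
      0 < ((Matrix.of fun i j : Fin (M+1) => T i j) ^ k) i j := by
  intro k
  induction k with
  | zero =>
    intro i j h1 h2
    simp only [Nat.zero_mul, Nat.add_zero] at h1 h2
    have : i = j := Fin.ext (by omega)
    subst this
    simp [pow_zero, Matrix.one_apply]
  | succ k ih =>
    intro i j h1 h2
    rw [Nat.succ_mul] at h1 h2
    have hi : i.val ≤ M := by omega
    have hj : j.val ≤ M := by omega
    have hm0 : min (min (i.val + q) (j.val + k * p)) M < M + 1 := by omega
    set m : Fin (M+1) := ⟨min (min (i.val + q) (j.val + k * p)) M, hm0⟩ with hm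
    have s1 : i.val ≤ m.val + p := by simp only [hm]; omega
    have s2 : m.val ≤ i.val + q := by simp only [hm]; omega
    have s3 : m.val ≤ j.val + k * p := by simp only [hm]; omega
    have s4 : j.val ≤ m.val + k * q := by simp only [hm]; omega
    rw [pow_succ', Matrix.mul_apply]
    apply Finset.sum_pos'
    · intro x _
      exact mul_nonneg (hnn _ _) (pow_entry_nonneg _ (fun _ _ => hnn _ _) _ _ _)
    · exact ⟨m, Finset.mem_univ m, mul_pos (hpos _ _ s1 s2) (ih m j s3 s4)⟩

lemma pow_entry_mono {N M : ℕ} (h : N + 1 ≤ M + 1) (T : ℕ → ℕ → ℝ)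
    (hnn : ∀ i j : ℕ, 0 ≤ T i j) :
    ∀ k (i j : Fin (N+1)),
      ((Matrix.of fun i j : Fin (N+1) => T i j) ^ k) i j
        ≤ ((Matrix.of fun i j : Fin (M+1) => T i j) ^ k)
            (Fin.castLE h i) (Fin.castLE h j) := by
  intro k
  induction k with
  | zero =>
    intro i j
    rw [pow_zero, pow_zero, Matrix.one_apply, Matrix.one_apply]
    by_cases hij : i = j
    · simp [hij]
    · have : Fin.castLE h i ≠ Fin.castLE h j := by
        simpa [Fin.castLE_inj] using hij
      simp [hij, this]
  | succ k ih =>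
    intro i j
    rw [pow_succ, Matrix.mul_apply, pow_succ, Matrix.mul_apply]
    have hBnn := pow_entry_nonneg (Matrix.of fun i j : Fin (N+1) => T i j)
      (fun _ _ => hnn _ _)
    have hAnn := pow_entry_nonneg (Matrix.of fun i j : Fin (M+1) => T i j)
      (fun _ _ => hnn _ _)
    calc ∑ x : Fin (N+1),
          ((Matrix.of fun i j : Fin (N+1) => T i j) ^ k) i x
            * (Matrix.of fun i j : Fin (N+1) => T i j) x j
        ≤ ∑ x : Fin (N+1),
          ((Matrix.of fun i j : Fin (M+1) => T i j) ^ k) (Fin.castLE h i) (Fin.castLE h x)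
            * (Matrix.of fun i j : Fin (M+1) => T i j) (Fin.castLE h x) (Fin.castLE h j) := by
          apply Finset.sum_le_sum
          intro x _
          have heq : (Matrix.of fun i j : Fin (N+1) => T i j) x j
              = (Matrix.of fun i j : Fin (M+1) => T i j) (Fin.castLE h x) (Fin.castLE h j) := rfl
          rw [heq]
          exact mul_le_mul_of_nonneg_right (ih i x) (hnn _ _)
      _ = ∑ y ∈ Finset.univ.map (Fin.castLEEmb h),
          ((Matrix.of fun i j : Fin (M+1) => T i j) ^ k) (Fin.castLE h i) y
            * (Matrix.of fun i j : Fin (M+1) => T i j) y (Fin.castLE h j) := by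
          rw [Finset.sum_map]; rfl
      _ ≤ ∑ y : Fin (M+1),
          ((Matrix.of fun i j : Fin (M+1) => T i j) ^ k) (Fin.castLE h i) y
            * (Matrix.of fun i j : Fin (M+1) => T i j) y (Fin.castLE h j) := by
          apply Finset.sum_le_sum_of_subset_of_nonneg (Finset.subset_univ _)
          intro y _ _
          exact mul_nonneg (hAnn _ _ _) (hnn _ _)

/-- Optimality of the degrees of precision: for a `(p,q)`-banded matrix `T` which is
strictly positive inside the band, `a ∈ {1,…,p}`, `b ∈ {1,…,q}`, `N ≥ max(p,q)` and
`d = ⌈(N+2−a)/p⌉ + ⌈(N+2−b)/q⌉ − 1`, for every `M ≥ N+1` the `(b−1, a−1)` entry of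
`(T^{[M]})^{d+1}` is strictly greater than that of `(T^{[N]})^{d+1}`. -/
theorem degrees_of_precision_optimal
    (p q : ℕ) (hp : 1 ≤ p) (hq : 1 ≤ q)
    (T : ℕ → ℕ → ℝ)
    (hband : ∀ i j, (j + p < i ∨ i + q < j) → T i j = 0)
    (hpos : ∀ i j, i ≤ j + p → j ≤ i + q → 0 < T i j)
    (a b N : ℕ) (ha1 : 1 ≤ a) (hap : a ≤ p) (hb1 : 1 ≤ b) (hbq : b ≤ q)
    (hN : max p q ≤ N)
    (d : ℕ)
    (hd : (d : ℤ) = ⌈(((N : ℤ) + 2 - (a : ℤ)) : ℚ) / (p : ℚ)⌉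
        + ⌈(((N : ℤ) + 2 - (b : ℤ)) : ℚ) / (q : ℚ)⌉ - 1) :
    ∀ M : ℕ, ∀ _hNM : N + 1 ≤ M,
      ((Matrix.of fun i j : Fin (N + 1) => T i j) ^ (d + 1))
          ⟨b - 1, by omega⟩ ⟨a - 1, by omega⟩
        < ((Matrix.of fun i j : Fin (M + 1) => T i j) ^ (d + 1))
          ⟨b - 1, by omega⟩ ⟨a - 1, by omega⟩ := by
  intro M hNM
  have hnn : ∀ i j : ℕ, 0 ≤ T i j := by
    intro i j
    by_cases hin : i ≤ j + p ∧ j ≤ i + q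
    · exact (hpos i j hin.1 hin.2).le
    · rw [hband i j (by omega)]
  have hpN : p ≤ N := le_trans (le_max_left p q) hN
  have hqN : q ≤ N := le_trans (le_max_right p q) hN
  set lZ := ⌈(((N : ℤ) + 2 - (a : ℤ)) : ℚ) / (p : ℚ)⌉ with hlZ
  set kZ := ⌈(((N : ℤ) + 2 - (b : ℤ)) : ℚ) / (q : ℚ)⌉ with hkZ
  have hppos : (0:ℚ) < p := by exact_mod_cast hp
  have hqpos : (0:ℚ) < q := by exact_mod_cast hq
  have hanum : (0:ℚ) < (((N : ℤ) + 2 - (a : ℤ)) : ℚ) := by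
    push_cast
    have : (a:ℚ) ≤ (N:ℚ) := by exact_mod_cast le_trans hap hpN
    linarith
  have hbnum : (0:ℚ) < (((N : ℤ) + 2 - (b : ℤ)) : ℚ) := by
    push_cast
    have : (b:ℚ) ≤ (N:ℚ) := by exact_mod_cast le_trans hbq hqN
    linarith
  have hlZpos : 0 < lZ := Int.ceil_pos.mpr (div_pos hanum hppos)
  have hkZpos : 0 < kZ := Int.ceil_pos.mpr (div_pos hbnum hqpos)
  have hl1 : (((N : ℤ) + 2 - (a : ℤ)) : ℚ) ≤ (lZ : ℚ) * (p : ℚ) := by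
    rw [← div_le_iff₀ hppos]
    exact Int.le_ceil _
  have hk1 : (((N : ℤ) + 2 - (b : ℤ)) : ℚ) ≤ (kZ : ℚ) * (q : ℚ) := by
    rw [← div_le_iff₀ hqpos]
    exact Int.le_ceil _
  set l := lZ.toNat with hlnatdef
  set k := kZ.toNat with hknatdef
  have hlnat : (l:ℤ) = lZ := Int.toNat_of_nonneg hlZpos.le
  have hknat : (k:ℤ) = kZ := Int.toNat_of_nonneg hkZpos.le
  have hlp : N + 2 ≤ a + l * p := by
    have h1 : ((N : ℤ) + 2 - (a : ℤ)) ≤ lZ * p := by exact_mod_cast hl1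
    rw [← hlnat] at h1
    have : ((N : ℤ) + 2) ≤ (a : ℤ) + (l * p : ℕ) := by push_cast; linarith
    exact_mod_cast this
  have hkq : N + 2 ≤ b + k * q := by
    have h1 : ((N : ℤ) + 2 - (b : ℤ)) ≤ kZ * q := by exact_mod_cast hk1
    rw [← hknat] at h1
    have : ((N : ℤ) + 2) ≤ (b : ℤ) + (k * q : ℕ) := by push_cast; linarith
    exact_mod_cast this
  have hdkl : d + 1 = k + l := by omega
  have hle : N + 1 ≤ M + 1 := by omega
  set A := (Matrix.of fun i j : Fin (M + 1) => T i j) with hAdef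
  set B := (Matrix.of fun i j : Fin (N + 1) => T i j) with hBdef
  have pbN : b - 1 < N + 1 := by omega
  have paN : a - 1 < N + 1 := by omega
  have pbM : b - 1 < M + 1 := by omega
  have paM : a - 1 < M + 1 := by omega
  have pmid : N + 1 < M + 1 := by omega
  have hBnn := pow_entry_nonneg B (fun _ _ => hnn _ _)
  have hAnn := pow_entry_nonneg A (fun _ _ => hnn _ _)
  have hmidpos : 0 < (A ^ k) ⟨b - 1, pbM⟩ ⟨N + 1, pmid⟩ * (A ^ l) ⟨N + 1, pmid⟩ ⟨a - 1, paM⟩ := by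
    refine mul_pos (pow_entry_pos p q M T hpos hnn k _ _ ?_ ?_)
      (pow_entry_pos p q M T hpos hnn l _ _ ?_ ?_)
    · show b - 1 ≤ (N + 1) + k * p; omega
    · show N + 1 ≤ (b - 1) + k * q; omega
    · show N + 1 ≤ (a - 1) + l * p; omega
    · show a - 1 ≤ (N + 1) + l * q; omega
  have hnotmem : (⟨N + 1, pmid⟩ : Fin (M + 1)) ∉ Finset.univ.map (Fin.castLEEmb hle) := by
    intro hmem
    obtain ⟨x, -, hx⟩ := Finset.mem_map.mp hmem
    have h1 : (x : ℕ) = N + 1 := by simpa using congrArg Fin.val hx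
    have := x.isLt
    omega
  rw [hdkl, pow_add, pow_add, Matrix.mul_apply, Matrix.mul_apply]
  calc ∑ x : Fin (N + 1), (B ^ k) ⟨b - 1, pbN⟩ x * (B ^ l) x ⟨a - 1, paN⟩
      ≤ ∑ x : Fin (N + 1),
          (A ^ k) ⟨b - 1, pbM⟩ (Fin.castLE hle x) * (A ^ l) (Fin.castLE hle x) ⟨a - 1, paM⟩ := by
        apply Finset.sum_le_sum
        intro x _
        exact mul_le_mul (pow_entry_mono hle T hnn k ⟨b - 1, pbN⟩ x)
          (pow_entry_mono hle T hnn l x ⟨a - 1, paN⟩) (hBnn _ _ _) (hAnn _ _ _)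
    _ = ∑ y ∈ Finset.univ.map (Fin.castLEEmb hle),
          (A ^ k) ⟨b - 1, pbM⟩ y * (A ^ l) y ⟨a - 1, paM⟩ := by
        rw [Finset.sum_map]; rfl
    _ < (A ^ k) ⟨b - 1, pbM⟩ ⟨N + 1, pmid⟩ * (A ^ l) ⟨N + 1, pmid⟩ ⟨a - 1, paM⟩
        + ∑ y ∈ Finset.univ.map (Fin.castLEEmb hle),
          (A ^ k) ⟨b - 1, pbM⟩ y * (A ^ l) y ⟨a - 1, paM⟩ := by linarith
    _ = ∑ y ∈ insert (⟨N + 1, pmid⟩ : Fin (M + 1)) (Finset.univ.map (Fin.castLEEmb hle)),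
          (A ^ k) ⟨b - 1, pbM⟩ y * (A ^ l) y ⟨a - 1, paM⟩ := by
        rw [Finset.sum_insert hnotmem]
    _ ≤ ∑ y : Fin (M + 1), (A ^ k) ⟨b - 1, pbM⟩ y * (A ^ l) y ⟨a - 1, paM⟩ := by
        apply Finset.sum_le_sum_of_subset_of_nonneg (Finset.subset_univ _)
        intro y _ _
        exact mul_nonneg (hAnn _ _ _) (hAnn _ _ _)
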